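/- For bᵢⱼ ∈ ℂ (i ≠ j, i,j ∈ {1,…,n}) with the entries in each column j pairwise distinct, the solutions of the system hᵢ(x) = ∏_{j≠i}(xⱼ − bᵢⱼ) = 0, i = 1,…,n, are exactly the points x^σ defined by x^σ_{σ(i)} = b_{i,σ(i)} as σ ranges over derangements of {1,…,n}; hence this system has exactly !n solutions. -/
import Mathlib


/-- For bᵢⱼ ∈ ℂ with pairwise distinct entries in each column (off the diagonal),
the solutions of hᵢ(x) = ∏_{j≠i}(xⱼ − bᵢⱼ) = 0 (i = 1,…,n) are exactly the
points x^σ with x^σ_{σ(i)} = b_{i,σ(i)} for derangements σ, and there are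
exactly !n of them. -/
theorem stmt_13 (n : ℕ) (hn : 2 ≤ n) (b : Fin n → Fin n → ℂ)
    (hcol : ∀ j i i' : Fin n, i ≠ j → i' ≠ j → b i j = b i' j → i = i') :
    {x : Fin n → ℂ |
        ∀ i : Fin n, ∏ j ∈ Finset.univ.filter (fun j => j ≠ i), (x j - b i j) = 0}
      = {x : Fin n → ℂ | ∃ σ : Equiv.Perm (Fin n),
          (∀ i, σ i ≠ i) ∧ ∀ i, x (σ i) = b i (σ i)} ∧
    Set.ncard {x : Fin n → ℂ |
        ∀ i : Fin n, ∏ j ∈ Finset.univ.filter (fun j => j ≠ i), (x j - b i j) = 0}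
      = numDerangements n := by
  have key : {x : Fin n → ℂ |
        ∀ i : Fin n, ∏ j ∈ Finset.univ.filter (fun j => j ≠ i), (x j - b i j) = 0}
      = {x : Fin n → ℂ | ∃ σ : Equiv.Perm (Fin n),
          (∀ i, σ i ≠ i) ∧ ∀ i, x (σ i) = b i (σ i)} := by
    ext x
    simp only [Set.mem_setOf_eq]
    constructor
    · intro hx
      have h1 : ∀ i : Fin n, ∃ j, j ≠ i ∧ x j = b i j := by
        intro i
        have := hx i
        rw [Finset.prod_eq_zero_iff] at this
        obtain ⟨j, hj, hz⟩ := this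
        simp only [Finset.mem_filter, Finset.mem_univ, true_and] at hj
        exact ⟨j, hj, sub_eq_zero.mp hz⟩
      choose f hf1 hf2 using h1
      have hinj : Function.Injective f := by
        intro i i' h
        exact hcol (f i) i i' (hf1 i).symm (Ne.symm (h ▸ hf1 i')) (by rw [← hf2 i, h, hf2 i'])
      let σ := Equiv.ofBijective f (Finite.injective_iff_bijective.mp hinj)
      exact ⟨σ, fun i => hf1 i, fun i => hf2 i⟩
    · rintro ⟨σ, hσ, hx⟩ i
      apply Finset.prod_eq_zero (i := σ i)
      · simp [hσ i]
      · rw [hx i, sub_self]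
  refine ⟨key, ?_⟩
  rw [key]
  have himg : {x : Fin n → ℂ | ∃ σ : Equiv.Perm (Fin n),
          (∀ i, σ i ≠ i) ∧ ∀ i, x (σ i) = b i (σ i)}
      = (fun σ : Equiv.Perm (Fin n) => fun k => b (σ.symm k) k) '' derangements (Fin n) := by
    ext x
    simp only [Set.mem_image, Set.mem_setOf_eq, derangements, Set.mem_setOf_eq,
      Function.IsFixedPt]
    constructor
    · rintro ⟨σ, h1, h2⟩
      refine ⟨σ, h1, ?_⟩
      funext k
      have := h2 (σ.symm k)
      simpa using this.symm
    · rintro ⟨σ, h1, rfl⟩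
      exact ⟨σ, h1, fun i => by simp⟩
  rw [himg]
  have hinj : Set.InjOn (fun σ : Equiv.Perm (Fin n) => fun k => b (σ.symm k) k)
      (derangements (Fin n)) := by
    intro σ hσ τ hτ h
    apply Equiv.ext
    intro i
    have h1 : b i (σ i) = b (τ.symm (σ i)) (σ i) := by
      have := congrFun h (σ i)
      simpa using this
    have h2 : i = τ.symm (σ i) :=
      hcol (σ i) i (τ.symm (σ i)) (fun he => hσ i he.symm)
        (fun he => hτ (σ i) ((by simpa using congrArg τ he : Eq (σ i) (τ (σ i))).symm)) h1
    have := congrArg τ h2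
    simpa using this.symm
  rw [Set.ncard_image_of_injOn hinj]
  rw [← Nat.card_coe_set_eq, Nat.card_eq_fintype_card]
  exact card_derangements_fin_eq_numDerangements
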